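/- arXiv:1410.2932 — 2 statements merged into one kernel-verified Lean document; each statement's English description precedes it below -/
import Mathlib

section
/- Let λ be a Young diagram, r ≥ 2, and fix a residue class k mod r and c ∈ ℤ. Call a box (p, q) a k-box if q − p ≡ k − c (mod r), call a k-box of λ k-removable if removing it yields a Young diagram, and call a k-box not in λ k-addable if adding it yields a Young diagram. Let v_j denote the number of boxes (p,q) ∈ λ with q − p ≡ j − c (mod r). Then the number of k-addable boxes minus the number of k-removable boxes equals δ + (v_{k+1} − v_k) + (v_{k−1} − v_k), where δ = 1 if k ≡ c (mod r) and δ = 0 otherwise, and indices of v are taken mod r. -/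
/-!
Let `a(x)` and `r(x)` be the indicators of `x` being addable resp. removable and `[·]` the
indicator of membership in `Y`. For every `x ∈ ℕ × ℕ`, a finite check that uses only that `Y` is
down-closed gives the local identity
`a(x + (1,1)) - r(x) = [x + (1,0)] + [x + (0,1)] - [x] - [x + (1,1)] + [x = 0]`.
Both boxes on the left have the content of `x`. Weighting by a function `f` of the content and
summing over all `x`, the four terms on the right become sums over the boxes `y` of `Y` of
`f (c y + 1)`, `f (c y - 1)`, `f (c y)`, `f (c y)`, so that
`∑_{addable} f (c x) - ∑_{removable} f (c x)
  = f 0 + ∑_{y ∈ Y} (f (c y + 1) + f (c y - 1) - 2 f (c y))`.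
The theorem is the case where `f` is the indicator of a residue class mod `r`.
-/

/-- A Young diagram: a finite subset of `(ℕ⁺)²` (here: pairs of naturals with both
coordinates `≥ 1`) closed under componentwise decrease. The box `(i, j)` lies in
row `i` and column `j`. -/
def IsYoung (Y : Finset (ℕ × ℕ)) : Prop :=
  (∀ p ∈ Y, 1 ≤ p.1 ∧ 1 ≤ p.2) ∧
  (∀ p ∈ Y, ∀ q : ℕ × ℕ, 1 ≤ q.1 → 1 ≤ q.2 → q.1 ≤ p.1 → q.2 ≤ p.2 → q ∈ Y)

/-- The number of boxes of `Y` whose residue `q - p` is congruent to `j - c` mod `r`. -/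
noncomputable def resCount (r : ℕ) (c : ℤ) (Y : Finset (ℕ × ℕ)) (j : ℤ) : ℕ :=
  {p : ℕ × ℕ | p ∈ Y ∧ Int.ModEq r ((p.2 : ℤ) - p.1) (j - c)}.ncard

lemma Int.modEq_iff_of_sub_eq {n a b a' b' : ℤ} (h : b - a = b' - a') :
    a ≡ b [ZMOD n] ↔ a' ≡ b' [ZMOD n] := by
  rw [Int.modEq_iff_dvd, Int.modEq_iff_dvd, h]

def content (x : ℕ × ℕ) : ℤ := x.2 - x.1

def addableBoxes (Y : Finset (ℕ × ℕ)) : Set (ℕ × ℕ) := {x | x ∉ Y ∧ IsYoung (insert x Y)}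

def removableBoxes (Y : Finset (ℕ × ℕ)) : Set (ℕ × ℕ) := {x | x ∈ Y ∧ IsYoung (Y.erase x)}

lemma resCount_eq_sum (r : ℕ) (c : ℤ) (Y : Finset (ℕ × ℕ)) (j : ℤ) :
    (resCount r c Y j : ℤ) = ∑ y ∈ Y, if content y ≡ j - c [ZMOD r] then 1 else 0 := by
  classical
  rw [resCount, ← Finset.coe_filter, Set.ncard_coe_finset, Finset.card_filter, Nat.cast_sum]
  push_cast
  rfl

lemma content_add (x y : ℕ × ℕ) : content (x + y) = content x + content y := by
  simp only [content, Prod.fst_add, Prod.snd_add, Nat.cast_add]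
  ring

lemma finsum_mem_eq_finsum_mem_preimage_add {M β : Type*} [AddCommMonoid M] [PartialOrder M]
    [CanonicallyOrderedAdd M] [IsRightCancelAdd M] [AddCommMonoid β] {s : Set M} {v : M}
    (hs : ∀ y ∈ s, v ≤ y) (f : M → β) :
    ∑ᶠ y ∈ s, f y = ∑ᶠ x ∈ (· + v) ⁻¹' s, f (x + v) := by
  have himage : (· + v) '' ((· + v) ⁻¹' s) = s := by
    refine Set.image_preimage_eq_of_subset fun y hy => ?_
    obtain ⟨c, rfl⟩ := le_iff_exists_add.1 (hs y hy)
    exact ⟨c, add_comm c v⟩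
  conv_lhs => rw [← himage]
  exact finsum_mem_image (add_left_injective v).injOn

lemma Set.ncard_sep_eq_finsum_mem_ite {α : Type*} (s : Set α) (p : α → Prop) [DecidablePred p] :
    (({x ∈ s | p x}.ncard : ℕ) : ℤ) = ∑ᶠ x ∈ s, if p x then 1 else 0 := by
  have hsupp : s ∩ Function.support (fun x => if p x then (1 : ℤ) else 0) = {x ∈ s | p x} := by
    ext x
    simp [Function.mem_support]
  rcases Set.finite_or_infinite {x ∈ s | p x} with hfin | hinf
  · rw [← finsum_mem_inter_support, hsupp, ← finsum_one, Nat.cast_finsum_mem hfin]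
    exact finsum_mem_congr rfl fun x hx => by simp [hx.2]
  · rw [hinf.ncard, finsum_mem_eq_zero_of_infinite (hsupp ▸ hinf), Nat.cast_zero]

lemma one_le_of_mem_addableBoxes {Y : Finset (ℕ × ℕ)} {x : ℕ × ℕ} (hx : x ∈ addableBoxes Y) :
    (1, 1) ≤ x :=
  hx.2.1 x (Finset.mem_insert_self x Y)

namespace IsYoung

variable {Y : Finset (ℕ × ℕ)}

lemma mem_of_le (hY : IsYoung Y) {x y : ℕ × ℕ} (hx : x ∈ Y) (hy : (1, 1) ≤ y) (hyx : y ≤ x) :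
    y ∈ Y :=
  hY.2 x hx y hy.1 hy.2 hyx.1 hyx.2

lemma fst_pos (hY : IsYoung Y) {x : ℕ × ℕ} (hx : x ∈ Y) : 0 < x.1 := (hY.1 x hx).1

lemma snd_pos (hY : IsYoung Y) {x : ℕ × ℕ} (hx : x ∈ Y) : 0 < x.2 := (hY.1 x hx).2

lemma eq_zero_or_mem_of_succ_mem_fst (hY : IsYoung Y) {i j : ℕ} (h : (i + 1, j) ∈ Y) :
    i = 0 ∨ (i, j) ∈ Y := by
  rcases Nat.eq_zero_or_pos i with hi | hi
  · exact .inl hi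
  · have hj : 0 < j := hY.snd_pos h
    exact .inr (hY.mem_of_le h ⟨hi, hj⟩ ⟨i.le_succ, le_rfl⟩)

lemma eq_zero_or_mem_of_succ_mem_snd (hY : IsYoung Y) {i j : ℕ} (h : (i, j + 1) ∈ Y) :
    j = 0 ∨ (i, j) ∈ Y := by
  rcases Nat.eq_zero_or_pos j with hj | hj
  · exact .inl hj
  · have hi : 0 < i := hY.fst_pos h
    exact .inr (hY.mem_of_le h ⟨hi, hj⟩ ⟨le_rfl, j.le_succ⟩)

lemma mem_addableBoxes_iff (hY : IsYoung Y) (i j : ℕ) :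
    (i + 1, j + 1) ∈ addableBoxes Y ↔
      (i + 1, j + 1) ∉ Y ∧ (i = 0 ∨ (i, j + 1) ∈ Y) ∧ (j = 0 ∨ (i + 1, j) ∈ Y) := by
  constructor
  · rintro ⟨hx, hins⟩
    have below : ∀ y, (1, 1) ≤ y → y ≤ (i + 1, j + 1) → y ≠ (i + 1, j + 1) → y ∈ Y :=
      fun y hy hyx hne => (Finset.mem_insert.1 (hins.2 _ (Finset.mem_insert_self _ _) y
        hy.1 hy.2 hyx.1 hyx.2)).resolve_left hne
    refine ⟨hx, ?_, ?_⟩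
    · rcases Nat.eq_zero_or_pos i with hi | hi
      · exact .inl hi
      · exact .inr (below _ ⟨hi, Nat.le_add_left 1 j⟩ ⟨i.le_succ, le_rfl⟩ (by simp))
    · rcases Nat.eq_zero_or_pos j with hj | hj
      · exact .inl hj
      · exact .inr (below _ ⟨Nat.le_add_left 1 i, hj⟩ ⟨le_rfl, j.le_succ⟩ (by simp))
  · rintro ⟨hx, hup, hleft⟩
    refine ⟨hx, fun y hy => ?_, fun y hy z hz1 hz2 hzy1 hzy2 => ?_⟩
    · rcases Finset.mem_insert.1 hy with rfl | hy
      · exact ⟨Nat.le_add_left 1 i, Nat.le_add_left 1 j⟩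
      · exact hY.1 y hy
    rcases Finset.mem_insert.1 hy with rfl | hy
    · by_cases hz : z = (i + 1, j + 1)
      · exact hz ▸ Finset.mem_insert_self _ _
      refine Finset.mem_insert_of_mem ?_
      rcases Nat.lt_or_ge i z.1 with hi | hi
      · have hj : z.2 ≤ j := by
          by_contra h
          exact hz (Prod.ext (le_antisymm hzy1 hi) (le_antisymm hzy2 (not_le.1 h)))
        rcases hleft with rfl | hleft
        · omega
        · exact hY.mem_of_le hleft ⟨hz1, hz2⟩ ⟨hzy1, hj⟩
      · rcases hup with rfl | hup
        · omega
        · exact hY.mem_of_le hup ⟨hz1, hz2⟩ ⟨hi, hzy2⟩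
    · exact Finset.mem_insert_of_mem (hY.2 y hy z hz1 hz2 hzy1 hzy2)

lemma mem_removableBoxes_iff (hY : IsYoung Y) {x : ℕ × ℕ} :
    x ∈ removableBoxes Y ↔ x ∈ Y ∧ (x.1 + 1, x.2) ∉ Y ∧ (x.1, x.2 + 1) ∉ Y := by
  refine and_congr_right fun hx =>
    ⟨fun hY' => ⟨fun h => ?_, fun h => ?_⟩, fun ⟨hdown, hright⟩ => ?_⟩
  · exact Finset.notMem_erase x Y (hY'.mem_of_le (Finset.mem_erase.2 ⟨by simp [Prod.ext_iff], h⟩)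
      (hY.1 x hx) ⟨x.1.le_succ, le_rfl⟩)
  · exact Finset.notMem_erase x Y (hY'.mem_of_le (Finset.mem_erase.2 ⟨by simp [Prod.ext_iff], h⟩)
      (hY.1 x hx) ⟨le_rfl, x.2.le_succ⟩)
  refine ⟨fun y hy => hY.1 y (Finset.mem_of_mem_erase hy), fun y hy z hz1 hz2 hzy1 hzy2 => ?_⟩
  obtain ⟨hyx, hyY⟩ := Finset.mem_erase.1 hy
  refine Finset.mem_erase.2 ⟨?_, hY.2 y hyY z hz1 hz2 hzy1 hzy2⟩
  rintro rfl
  rcases Nat.lt_or_ge z.1 y.1 with h | h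
  · exact hdown (hY.mem_of_le hyY ⟨by omega, hz2⟩ ⟨h, hzy2⟩)
  · have h2 : z.2 < y.2 := by
      by_contra; exact hyx (Prod.ext (by omega) (by omega))
    exact hright (hY.mem_of_le hyY ⟨hz1, by omega⟩ ⟨hzy1, h2⟩)

lemma indicator_preimage_addableBoxes (hY : IsYoung Y) (g : ℕ × ℕ → ℤ) (x : ℕ × ℕ) :
    ((· + (1, 1)) ⁻¹' addableBoxes Y).indicator g x =
      (removableBoxes Y).indicator g x + ((· + (1, 0)) ⁻¹' ↑Y).indicator g x
        + ((· + (0, 1)) ⁻¹' ↑Y).indicator g x - (Y : Set (ℕ × ℕ)).indicator g x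
        - ((· + (1, 1)) ⁻¹' ↑Y).indicator g x + ({0} : Set (ℕ × ℕ)).indicator g x := by
  classical
  obtain ⟨i, j⟩ := x
  have m1 := hY.eq_zero_or_mem_of_succ_mem_fst (i := i) (j := j)
  have m2 := hY.eq_zero_or_mem_of_succ_mem_snd (i := i) (j := j)
  have m3 := hY.eq_zero_or_mem_of_succ_mem_snd (i := i + 1) (j := j)
  have m4 := hY.eq_zero_or_mem_of_succ_mem_fst (i := i) (j := j + 1)
  have p1 : (i, j) ∈ Y → i ≠ 0 ∧ j ≠ 0 := fun h =>
    ⟨(hY.fst_pos h).ne', (hY.snd_pos h).ne'⟩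
  have p2 : (i + 1, j) ∈ Y → j ≠ 0 := fun h => (hY.snd_pos h).ne'
  have p3 : (i, j + 1) ∈ Y → i ≠ 0 := fun h => (hY.fst_pos h).ne'
  simp only [Set.indicator_apply, Set.mem_preimage, Prod.mk_add_mk, add_zero,
    Finset.mem_coe, Set.mem_singleton_iff, Prod.mk_eq_zero, hY.mem_addableBoxes_iff,
    hY.mem_removableBoxes_iff]
  split_ifs <;> simp_all

lemma finsum_mem_preimage_add_eq_sum (hY : IsYoung Y) (f : ℤ → ℤ) {v : ℕ × ℕ}
    (hv : v ≤ (1, 1)) :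
    ∑ᶠ x ∈ (· + v) ⁻¹' (Y : Set (ℕ × ℕ)), f (content x) = ∑ y ∈ Y, f (content y - content v) := by
  rw [← finsum_mem_coe_finset, finsum_mem_eq_finsum_mem_preimage_add
    (fun y hy => hv.trans (hY.1 y hy))]
  simp [content_add]

lemma finsum_mem_addableBoxes_eq_finsum_mem_preimage (f : ℤ → ℤ) :
    ∑ᶠ x ∈ addableBoxes Y, f (content x) =
      ∑ᶠ x ∈ (· + (1, 1)) ⁻¹' addableBoxes Y, f (content x) := by
  rw [finsum_mem_eq_finsum_mem_preimage_add fun x hx => one_le_of_mem_addableBoxes hx]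
  simp [content]

theorem finsum_mem_addableBoxes_sub_finsum_mem_removableBoxes (hY : IsYoung Y) (f : ℤ → ℤ) :
    ∑ᶠ x ∈ addableBoxes Y, f (content x) - ∑ᶠ x ∈ removableBoxes Y, f (content x) =
      f 0 + ∑ y ∈ Y, (f (content y + 1) + f (content y - 1) - 2 * f (content y)) := by
  set g : ℕ × ℕ → ℤ := fun x => f (content x)
  have hfin : ∀ s : Set (ℕ × ℕ), s.Finite → (s.indicator g).HasFiniteSupport :=
    fun s hs => hs.subset Set.support_indicator_subset
  have hpre : ∀ v : ℕ × ℕ, ((· + v) ⁻¹' (Y : Set (ℕ × ℕ))).Finite :=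
    fun v => Y.finite_toSet.preimage (add_left_injective v).injOn
  have hrhs : f 0 + ∑ y ∈ Y, (f (content y + 1) + f (content y - 1) - 2 * f (content y)) =
      ∑ᶠ x ∈ ({0} : Set (ℕ × ℕ)), g x + ∑ᶠ x ∈ (· + (1, 0)) ⁻¹' (Y : Set (ℕ × ℕ)), g x
        + ∑ᶠ x ∈ (· + (0, 1)) ⁻¹' (Y : Set (ℕ × ℕ)), g x - ∑ᶠ x ∈ (Y : Set (ℕ × ℕ)), g x
        - ∑ᶠ x ∈ (· + (1, 1)) ⁻¹' (Y : Set (ℕ × ℕ)), g x := by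
    rw [finsum_mem_singleton, finsum_mem_coe_finset,
      hY.finsum_mem_preimage_add_eq_sum f (by decide), hY.finsum_mem_preimage_add_eq_sum f (by decide),
      hY.finsum_mem_preimage_add_eq_sum f (v := (1, 1)) le_rfl]
    simp only [g, content, Prod.fst_zero, Prod.snd_zero, Finset.sum_add_distrib,
      Finset.sum_sub_distrib, ← Finset.mul_sum]
    push_cast
    ring_nf
  rw [hrhs, finsum_mem_addableBoxes_eq_finsum_mem_preimage]
  simp only [finsum_mem_def]
  rw [finsum_congr (hY.indicator_preimage_addableBoxes g)]
  have hR := hfin _ (Y.finite_toSet.subset fun x hx => hx.1 : (removableBoxes Y).Finite)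
  have h10 := hfin _ (hpre (1, 0))
  have h01 := hfin _ (hpre (0, 1))
  have h11 := hfin _ (hpre (1, 1))
  have hY₀ := hfin _ Y.finite_toSet
  have h0 := hfin _ (Set.finite_singleton (0 : ℕ × ℕ))
  rw [finsum_add_distrib (by fun_prop) h0, finsum_sub_distrib (by fun_prop) h11,
    finsum_sub_distrib (by fun_prop) hY₀, finsum_add_distrib (by fun_prop) h01,
    finsum_add_distrib hR h10]
  ring

end IsYoung

theorem addable_sub_removable_count_general (r : ℕ) (c k : ℤ)
    (Y : Finset (ℕ × ℕ)) (hY : IsYoung Y) :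
    ({p : ℕ × ℕ | p ∉ Y ∧ IsYoung (insert p Y) ∧
        Int.ModEq r ((p.2 : ℤ) - p.1) (k - c)}.ncard : ℤ)
      - ({p : ℕ × ℕ | p ∈ Y ∧ IsYoung (Y.erase p) ∧
        Int.ModEq r ((p.2 : ℤ) - p.1) (k - c)}.ncard : ℤ)
      = (if Int.ModEq r k c then 1 else 0)
        + ((resCount r c Y (k + 1) : ℤ) - resCount r c Y k)
        + ((resCount r c Y (k - 1) : ℤ) - resCount r c Y k) := by
  have hzero : (0 : ℤ) ≡ k - c [ZMOD r] ↔ k ≡ c [ZMOD r] :=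
    (Int.modEq_iff_of_sub_eq (by ring)).trans Int.modEq_comm
  have hplus : ∀ a : ℤ, a + 1 ≡ k - c [ZMOD r] ↔ a ≡ k - 1 - c [ZMOD r] :=
    fun _ => Int.modEq_iff_of_sub_eq (by ring)
  have hminus : ∀ a : ℤ, a - 1 ≡ k - c [ZMOD r] ↔ a ≡ k + 1 - c [ZMOD r] :=
    fun _ => Int.modEq_iff_of_sub_eq (by ring)
  have haddable : {p : ℕ × ℕ | p ∉ Y ∧ IsYoung (insert p Y) ∧
      Int.ModEq r ((p.2 : ℤ) - p.1) (k - c)} =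
      {x ∈ addableBoxes Y | content x ≡ k - c [ZMOD r]} := Set.ext fun _ => and_assoc.symm
  have hremovable : {p : ℕ × ℕ | p ∈ Y ∧ IsYoung (Y.erase p) ∧
      Int.ModEq r ((p.2 : ℤ) - p.1) (k - c)} =
      {x ∈ removableBoxes Y | content x ≡ k - c [ZMOD r]} := Set.ext fun _ => and_assoc.symm
  rw [haddable, hremovable, Set.ncard_sep_eq_finsum_mem_ite, Set.ncard_sep_eq_finsum_mem_ite,
    hY.finsum_mem_addableBoxes_sub_finsum_mem_removableBoxes
      (fun e => if e ≡ k - c [ZMOD r] then 1 else 0),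
    resCount_eq_sum, resCount_eq_sum, resCount_eq_sum]
  simp only [hzero, hplus, hminus, Finset.sum_add_distrib, Finset.sum_sub_distrib,
    ← Finset.mul_sum]
  ring

/-- For a Young diagram `λ`, `r ≥ 2`, residue class `k` mod `r` and `c ∈ ℤ`:
(number of `k`-addable boxes) − (number of `k`-removable boxes)
`= δ + (v_{k+1} − v_k) + (v_{k−1} − v_k)`, where `v_j` counts boxes of residue
`≡ j − c (mod r)`, and `δ = 1` iff `k ≡ c (mod r)`. A box `(p,q)` is a `k`-box if
`q − p ≡ k − c (mod r)`; it is `k`-removable (resp. `k`-addable) if it is a `k`-box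
of `λ` (resp. outside `λ`) whose removal (resp. addition) yields a Young diagram. -/
theorem addable_sub_removable_count (r : ℕ) (hr : 2 ≤ r) (c k : ℤ)
    (Y : Finset (ℕ × ℕ)) (hY : IsYoung Y) :
    ({p : ℕ × ℕ | p ∉ Y ∧ IsYoung (insert p Y) ∧
        Int.ModEq r ((p.2 : ℤ) - p.1) (k - c)}.ncard : ℤ)
      - ({p : ℕ × ℕ | p ∈ Y ∧ IsYoung (Y.erase p) ∧
        Int.ModEq r ((p.2 : ℤ) - p.1) (k - c)}.ncard : ℤ)
      = (if Int.ModEq r k c then 1 else 0)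
        + ((resCount r c Y (k + 1) : ℤ) - resCount r c Y k)
        + ((resCount r c Y (k - 1) : ℤ) - resCount r c Y k) :=
  addable_sub_removable_count_general r c k Y hY
end

section
/- In the r-coloured Clifford algebra with anti-commuting colours, the operators E = Σ_{i∈ℤ} ψ(k+ir)ψ*(k+ir+1) and F = Σ_{i∈ℤ} ψ(k+ir+1)ψ*(k+ir) acting on fermionic Fock space F (vector space with basis the semi-infinite monomials) are adjoint with respect to the bilinear form making the semi-infinite monomials an orthonormal basis, and their commutator [E, F] acts diagonally on basis elements. -/
open scoped Classical

/-- A "Maya diagram": the set of entries of a semi-infinite monomial. A subset `S ⊆ ℤ`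
arises as the set of entries of a strictly decreasing integer sequence `i₁ > i₂ > ⋯`
with `i_{n+1} = i_n - 1` eventually iff `S` contains only finitely many positive
integers and omits only finitely many non-positive integers. -/
def MayaP (S : Set ℤ) : Prop :=
  {z ∈ S | 0 < z}.Finite ∧ {z : ℤ | z ≤ 0 ∧ z ∉ S}.Finite

theorem MayaP.insert' {S : Set ℤ} (h : MayaP S) (i : ℤ) : MayaP (insert i S) := by
  constructor
  · apply (h.1.insert i).subset
    rintro z ⟨rfl | hz, hz0⟩
    · exact Set.mem_insert _ _
    · exact Set.mem_insert_of_mem _ ⟨hz, hz0⟩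
  · apply h.2.subset
    rintro z ⟨hz0, hz⟩
    exact ⟨hz0, fun h' => hz (Set.mem_insert_of_mem _ h')⟩

theorem MayaP.diff' {S : Set ℤ} (h : MayaP S) (i : ℤ) : MayaP (S \ {i}) := by
  constructor
  · exact h.1.subset (by rintro z ⟨⟨hz, _⟩, hz0⟩; exact ⟨hz, hz0⟩)
  · apply (h.2.insert i).subset
    rintro z ⟨hz0, hz⟩
    by_cases hzi : z = i
    · exact Or.inl hzi
    · exact Or.inr ⟨hz0, fun h' => hz ⟨h', hzi⟩⟩

/-- The type of semi-infinite monomials, encoded as Maya diagrams. -/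
abbrev Maya := {S : Set ℤ // MayaP S}

/-- Fermionic Fock space: the complex vector space with basis the semi-infinite
monomials. -/
abbrev FSpace := Maya →₀ ℂ

/-- The sign `(-1)^k`, where `k` is the number of entries of the monomial greater
than `i`. -/
noncomputable def sgn (S : Set ℤ) (i : ℤ) : ℂ := (-1) ^ (S ∩ Set.Ioi i).ncard

/-- The wedging operator `ψ(i)`: inserts the entry `i` with sign `(-1)^k` (where `k`
entries precede the insertion point), and is zero if `i` already occurs. -/
noncomputable def psi (i : ℤ) : FSpace →ₗ[ℂ] FSpace :=
  Finsupp.lift FSpace ℂ Maya fun S =>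
    if i ∈ S.1 then 0
    else Finsupp.single ⟨insert i S.1, S.2.insert' i⟩ (sgn S.1 i)

/-- The contracting operator `ψ*(i)`: removes the entry `i` with sign `(-1)^(k-1)`
(where `i` is the `k`-th entry), and is zero if `i` does not occur. -/
noncomputable def psiStar (i : ℤ) : FSpace →ₗ[ℂ] FSpace :=
  Finsupp.lift FSpace ℂ Maya fun S =>
    if i ∈ S.1 then Finsupp.single ⟨S.1 \ {i}, S.2.diff' i⟩ (sgn S.1 i)
    else 0

/-- The charge of a semi-infinite monomial: the unique `c` with `i_n = c - n + 1`
for `n ≫ 0`. -/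
noncomputable def chargeOf (S : Maya) : ℤ :=
  ((S.1 ∩ Set.Ioi 0).ncard : ℤ) - (({z : ℤ | z ≤ 0} \ S.1).ncard : ℤ)

/-- The bilinear form on fermionic Fock space for which the semi-infinite monomials
form an orthonormal basis. -/
noncomputable def bform (f g : FSpace) : ℂ := f.sum fun S a => a * g S

/-- The operator `E = Σ_{i∈ℤ} ψ(k+ir)ψ*(k+ir+1)`, defined on basis elements by a
(locally finite) sum. -/
noncomputable def Eop (r : ℕ) (k : ℤ) : FSpace →ₗ[ℂ] FSpace :=
  Finsupp.lift FSpace ℂ Maya fun S =>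
    ∑ᶠ i : ℤ, psi (k + i * r) (psiStar (k + i * r + 1) (Finsupp.single S 1))

/-- The operator `F = Σ_{i∈ℤ} ψ(k+ir+1)ψ*(k+ir)`, defined on basis elements by a
(locally finite) sum. -/
noncomputable def Fop (r : ℕ) (k : ℤ) : FSpace →ₗ[ℂ] FSpace :=
  Finsupp.lift FSpace ℂ Maya fun S =>
    ∑ᶠ i : ℤ, psi (k + i * r + 1) (psiStar (k + i * r) (Finsupp.single S 1))

/-! For adjacent `a, b` the signs of `ψ(b)` and `ψ*(a)` cancel, so `ψ(b)ψ*(a)` is the signless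
operator `hop a b` moving the entry `a` of a monomial to `b`, and `E`, `F` are locally finite sums
of the moves `a + 1 → a` and `a → a + 1`, `a = k + ir`. Adjointness is the bijection between moves
`a + 1 → a` taking `I` to `J` and moves `a → a + 1` taking `J` back to `I`. Moves of `E` and `F`
at different indices commute, so `[E, F]` is the sum of the diagonal commutators, and the one at
`a` multiplies a monomial `S` by `[a ∈ S, a + 1 ∉ S] - [a + 1 ∈ S, a ∉ S]`. -/

open Function

section LocallyFiniteSum

variable {α ι R M : Type*} [Semiring R] [AddCommMonoid M] [Module R M]

theorem Finsupp.finite_support_apply_of_single (g : ι → (α →₀ R) →ₗ[R] M)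
    (hg : ∀ a, (Function.support fun i => g i (Finsupp.single a 1)).Finite) (y : α →₀ R) :
    (Function.support fun i => g i y).Finite := by
  induction y using Finsupp.induction_linear with
  | zero => simp
  | add y z hy hz =>
    refine (hy.union hz).subset ?_
    simpa only [map_add] using Function.support_add (fun i => g i y) (fun i => g i z)
  | single a c =>
    rw [← Finsupp.smul_single_one]
    simp only [map_smul]
    exact (hg a).subset (Function.support_const_smul_subset c _)

theorem Finsupp.lift_finsum_apply (g : ι → (α →₀ R) →ₗ[R] M)
    (hg : ∀ a, (Function.support fun i => g i (Finsupp.single a 1)).Finite) (y : α →₀ R) :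
    Finsupp.lift M R α (fun a => ∑ᶠ i, g i (Finsupp.single a 1)) y = ∑ᶠ i, g i y := by
  induction y using Finsupp.induction_linear with
  | zero => simp
  | add y z hy hz =>
    rw [map_add, hy, hz, ← finsum_add_distrib (finite_support_apply_of_single g hg y)
      (finite_support_apply_of_single g hg z)]
    simp only [map_add]
  | single a c =>
    rw [Finsupp.lift_apply, Finsupp.sum_single_index (by simp), smul_finsum' c (hg a)]
    simp only [← map_smul, Finsupp.smul_single_one]

end LocallyFiniteSum

theorem Finsupp.finsum_apply {ι α M : Type*} [AddCommMonoid M] {f : ι → α →₀ M}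
    (hf : (Function.support f).Finite) (a : α) : (∑ᶠ i, f i) a = ∑ᶠ i, f i a :=
  map_finsum (Finsupp.applyAddHom a) hf

theorem LinearMap.comp_sub_comp_apply_eq_finsum {ι R M : Type*} [Semiring R] [AddCommGroup M]
    [Module R M] (E F : M →ₗ[R] M) (e f : ι → M →ₗ[R] M) (x : M)
    (hE : ∀ y, E y = ∑ᶠ i, e i y) (hF : ∀ y, F y = ∑ᶠ i, f i y)
    (hex : (support fun i => e i x).Finite) (hfx : (support fun i => f i x).Finite)
    (hcomm : ∀ i j, i ≠ j → e i (f j x) = f j (e i x)) :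
    (E ∘ₗ F - F ∘ₗ E) x = ∑ᶠ i, (e i (f i x) - f i (e i x)) := by
  set s := (hex.union hfx).toFinset
  have hs : ∀ i ∉ s, e i x = 0 ∧ f i x = 0 := fun i hi => by
    simpa [s, not_or] using hi
  have sum_s : ∀ g : ι → M, (∀ i ∉ s, g i = 0) → ∑ᶠ i, g i = ∑ i ∈ s, g i := fun g hg =>
    finsum_eq_sum_of_support_subset g fun i hi => by_contra fun h => hi (hg i h)
  have hEF : E (F x) = ∑ j ∈ s, ∑ i ∈ s, e i (f j x) := by
    rw [hF, sum_s _ fun j hj => (hs j hj).2, map_sum]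
    refine Finset.sum_congr rfl fun j hj => ?_
    rw [hE, sum_s]
    intro i hi
    rw [hcomm i j (ne_of_mem_of_not_mem hj hi).symm, (hs i hi).1, map_zero]
  have hFE : F (E x) = ∑ i ∈ s, ∑ j ∈ s, f j (e i x) := by
    rw [hE, sum_s _ fun i hi => (hs i hi).1, map_sum]
    refine Finset.sum_congr rfl fun i hi => ?_
    rw [hF, sum_s]
    intro j hj
    rw [← hcomm i j (ne_of_mem_of_not_mem hi hj), (hs j hj).2, map_zero]
  rw [sub_apply, comp_apply, comp_apply, hEF, hFE, Finset.sum_comm, ← Finset.sum_sub_distrib,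
    sum_s _ fun i hi => by rw [(hs i hi).1, (hs i hi).2, map_zero, map_zero, sub_self]]
  refine Finset.sum_congr rfl fun i hi => ?_
  rw [← Finset.sum_sub_distrib, Finset.sum_eq_single_of_mem i hi]
  intro j _ hji
  rw [hcomm i j hji.symm, sub_self]

namespace Maya

def move (a b : ℤ) (S : Maya) : Maya :=
  ⟨insert b (S.1 \ {a}), (S.2.diff' a).insert' b⟩

@[simp]
theorem mem_move {a b z : ℤ} {S : Maya} : z ∈ (S.move a b).1 ↔ z = b ∨ z ∈ S.1 ∧ z ≠ a := by
  simp [move]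

theorem move_move {a b : ℤ} {S : Maya} (ha : a ∈ S.1) (hb : b ∉ S.1) :
    (S.move a b).move b a = S := by
  ext z
  simp only [mem_move]
  by_cases hza : z = a <;> by_cases hzb : z = b <;> simp_all

theorem move_move_comm {a a' b b' : ℤ} (hab' : a ≠ b') (ha'b : a' ≠ b) (S : Maya) :
    (S.move b b').move a a' = (S.move a a').move b b' := by
  ext z
  simp only [mem_move]
  by_cases hza : z = a <;> by_cases hza' : z = a' <;> by_cases hzb : z = b <;>
    by_cases hzb' : z = b' <;> simp_all

theorem move_eq_comm {a b : ℤ} (hab : a ≠ b) {I J : Maya} :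
    ((a ∈ I.1 ∧ b ∉ I.1) ∧ I.move a b = J) ↔ ((b ∈ J.1 ∧ a ∉ J.1) ∧ J.move b a = I) := by
  have key : ∀ {a b : ℤ}, a ≠ b → ∀ {I J : Maya},
      (a ∈ I.1 ∧ b ∉ I.1) ∧ I.move a b = J → (b ∈ J.1 ∧ a ∉ J.1) ∧ J.move b a = I := by
    rintro a b hab I J ⟨⟨ha, hb⟩, rfl⟩
    exact ⟨⟨by simp, by simp [hab]⟩, move_move ha hb⟩
  exact ⟨key hab, key hab.symm⟩

theorem finite_setOf_add_mem_and_add_not_mem (S : Maya) (c d : ℤ) :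
    {z : ℤ | z + c ∈ S.1 ∧ z + d ∉ S.1}.Finite := by
  refine (((S.2.1.preimage (add_left_injective c).injOn)).union
    ((S.2.2.preimage (add_left_injective d).injOn).union (Set.finite_Ioc (-d) (-c)))).subset ?_
  rintro z ⟨hc, hd⟩
  by_cases hzc : 0 < z + c
  · exact Or.inl ⟨hc, hzc⟩
  by_cases hzd : z + d ≤ 0
  · exact Or.inr (Or.inl ⟨hzd, hd⟩)
  · exact Or.inr (Or.inr ⟨by omega, by omega⟩)

end Maya

theorem sgn_mul_self (S : Set ℤ) (i : ℤ) : sgn S i * sgn S i = 1 := by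
  simp [sgn, ← mul_pow]

theorem sgn_diff_singleton_of_adjacent {S : Set ℤ} {a b : ℤ} (hb : b ∉ S)
    (hab : b = a + 1 ∨ a = b + 1) : sgn (S \ {a}) b = sgn S a := by
  unfold sgn
  congr 2
  ext z
  simp only [Set.mem_inter_iff, Set.mem_sdiff, Set.mem_singleton_iff, Set.mem_Ioi]
  by_cases hzb : z = b
  · subst hzb; simp only [hb, false_and]
  · by_cases hz : z ∈ S
    · simp only [hz, true_and]; omega
    · simp only [hz, false_and]

noncomputable def hop (a b : ℤ) : FSpace →ₗ[ℂ] FSpace :=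
  Finsupp.lift FSpace ℂ Maya fun S =>
    if a ∈ S.1 ∧ b ∉ S.1 then Finsupp.single (S.move a b) 1 else 0

theorem hop_single (a b : ℤ) (S : Maya) :
    hop a b (Finsupp.single S 1) =
      if a ∈ S.1 ∧ b ∉ S.1 then Finsupp.single (S.move a b) 1 else 0 := by
  simp [hop]

theorem hop_single_ne_zero_iff {a b : ℤ} {S : Maya} :
    hop a b (Finsupp.single S 1) ≠ 0 ↔ a ∈ S.1 ∧ b ∉ S.1 := by
  rw [hop_single]
  split_ifs with h <;> simp [h]

theorem psi_single (i : ℤ) (S : Maya) :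
    psi i (Finsupp.single S 1) =
      if i ∈ S.1 then 0 else Finsupp.single ⟨insert i S.1, S.2.insert' i⟩ (sgn S.1 i) := by
  rw [psi, Finsupp.lift_apply, Finsupp.sum_single_index] <;> simp

theorem psiStar_single (i : ℤ) (S : Maya) :
    psiStar i (Finsupp.single S 1) =
      if i ∈ S.1 then Finsupp.single ⟨S.1 \ {i}, S.2.diff' i⟩ (sgn S.1 i) else 0 := by
  rw [psiStar, Finsupp.lift_apply, Finsupp.sum_single_index] <;> simp

theorem psi_psiStar_single {a b : ℤ} (hab : a ≠ b) (S : Maya) :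
    psi b (psiStar a (Finsupp.single S 1)) =
      if a ∈ S.1 ∧ b ∉ S.1 then
        Finsupp.single (S.move a b) (sgn S.1 a * sgn (S.1 \ {a}) b) else 0 := by
  rw [psiStar_single]
  by_cases ha : a ∈ S.1
  · rw [if_pos ha, ← mul_one (sgn S.1 a), ← smul_eq_mul, ← Finsupp.smul_single, map_smul,
      psi_single]
    by_cases hb : b ∈ S.1
    · simp [ha, hb, show b ∈ S.1 \ {a} from ⟨hb, hab.symm⟩]
    · simp [ha, hb, Maya.move]
  · simp [ha]

/-- No entry lies strictly between adjacent `a` and `b`, so the signs of `ψ*(a)` and `ψ(b)`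
agree and cancel. -/
theorem psi_comp_psiStar_of_adjacent {a b : ℤ} (hab : b = a + 1 ∨ a = b + 1) :
    psi b ∘ₗ psiStar a = hop a b := by
  refine Finsupp.lhom_ext' fun S => LinearMap.ext_ring ?_
  simp only [LinearMap.comp_apply, Finsupp.lsingle_apply]
  rw [psi_psiStar_single (by omega), hop_single]
  split_ifs with h
  · rw [sgn_diff_singleton_of_adjacent h.2 hab, sgn_mul_self]
  · rfl

theorem psi_psiStar_succ (a : ℤ) (x : FSpace) : psi a (psiStar (a + 1) x) = hop (a + 1) a x :=
  LinearMap.congr_fun (psi_comp_psiStar_of_adjacent (a := a + 1) (b := a) (Or.inr rfl)) x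

theorem psi_succ_psiStar (a : ℤ) (x : FSpace) : psi (a + 1) (psiStar a x) = hop a (a + 1) x :=
  LinearMap.congr_fun (psi_comp_psiStar_of_adjacent (a := a) (b := a + 1) (Or.inl rfl)) x

theorem hop_single_apply (a b : ℤ) (I J : Maya) :
    hop a b (Finsupp.single I 1) J = hop b a (Finsupp.single J 1) I := by
  rcases eq_or_ne a b with rfl | hab
  · simp [hop_single]
  simp only [hop_single, apply_ite (fun x : FSpace => x J), apply_ite (fun x : FSpace => x I),
    Finsupp.single_apply, Finsupp.coe_zero, Pi.zero_apply, ← ite_and]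
  exact if_congr (Maya.move_eq_comm hab) rfl rfl

theorem hop_hop_single (a a' b b' : ℤ) (S : Maya) :
    hop a a' (hop b b' (Finsupp.single S 1)) =
      if b ∈ S.1 ∧ b' ∉ S.1 ∧ a ∈ (S.move b b').1 ∧ a' ∉ (S.move b b').1 then
        Finsupp.single ((S.move b b').move a a') 1 else 0 := by
  rw [hop_single]
  split_ifs <;> simp_all [hop_single]

theorem hop_hop_comm {a a' b b' : ℤ} (hab' : a ≠ b') (ha'b : a' ≠ b) (x : FSpace) :
    hop a a' (hop b b' x) = hop b b' (hop a a' x) := by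
  suffices h : hop a a' ∘ₗ hop b b' = hop b b' ∘ₗ hop a a' from LinearMap.congr_fun h x
  refine Finsupp.lhom_ext' fun S => LinearMap.ext_ring ?_
  simp only [LinearMap.comp_apply, Finsupp.lsingle_apply, hop_hop_single,
    Maya.move_move_comm hab' ha'b]
  refine if_congr ?_ rfl rfl
  simp only [Maya.mem_move, hab', ha'b.symm, false_or]
  tauto

theorem hop_swap_hop_single (a b : ℤ) (S : Maya) :
    hop b a (hop a b (Finsupp.single S 1)) =
      (if a ∈ S.1 ∧ b ∉ S.1 then 1 else 0 : ℂ) • Finsupp.single S 1 := by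
  rw [hop_hop_single]
  split_ifs <;> simp_all [Maya.move_move]

theorem bform_single_one_left (I : Maya) (g : FSpace) : bform (Finsupp.single I 1) g = g I := by
  simp [bform]

theorem bform_single_one_right (f : FSpace) (J : Maya) : bform f (Finsupp.single J 1) = f J := by
  simp only [bform, Finsupp.single_apply, mul_ite, mul_one, mul_zero]
  rw [Finsupp.sum_ite_eq, Finsupp.if_mem_support]

theorem injective_add_mul_natCast {r : ℕ} (hr : 0 < r) (k : ℤ) :
    Injective fun i : ℤ => k + i * r :=
  (add_right_injective k).comp (mul_left_injective₀ (by exact_mod_cast hr.ne'))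

theorem finite_support_hop_single {ι : Type*} {u : ι → ℤ} (hu : Injective u) (c d : ℤ)
    (S : Maya) : (support fun i => hop (u i + c) (u i + d) (Finsupp.single S 1)).Finite :=
  ((S.finite_setOf_add_mem_and_add_not_mem c d).preimage hu.injOn).subset
    fun _ hi => hop_single_ne_zero_iff.mp hi

theorem finite_support_Eop_terms {r : ℕ} (hr : 0 < r) (k : ℤ) (S : Maya) :
    (support fun i : ℤ => hop (k + i * r + 1) (k + i * r) (Finsupp.single S 1)).Finite := by
  simpa only [add_zero] using finite_support_hop_single (injective_add_mul_natCast hr k) 1 0 S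

theorem finite_support_Fop_terms {r : ℕ} (hr : 0 < r) (k : ℤ) (S : Maya) :
    (support fun i : ℤ => hop (k + i * r) (k + i * r + 1) (Finsupp.single S 1)).Finite := by
  simpa only [add_zero] using finite_support_hop_single (injective_add_mul_natCast hr k) 0 1 S

theorem Eop_apply {r : ℕ} (hr : 0 < r) (k : ℤ) (y : FSpace) :
    Eop r k y = ∑ᶠ i : ℤ, hop (k + i * r + 1) (k + i * r) y := by
  simp only [Eop, psi_psiStar_succ]
  exact Finsupp.lift_finsum_apply _ (finite_support_Eop_terms hr k) y

theorem Fop_apply {r : ℕ} (hr : 0 < r) (k : ℤ) (y : FSpace) :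
    Fop r k y = ∑ᶠ i : ℤ, hop (k + i * r) (k + i * r + 1) y := by
  simp only [Fop, psi_succ_psiStar]
  exact Finsupp.lift_finsum_apply _ (finite_support_Fop_terms hr k) y

theorem E_F_adjoint_and_commutator_diagonal_general (r : ℕ) (hr : 0 < r) (k : ℤ) :
    (∀ S : Maya,
      {i : ℤ | psi (k + i * r) (psiStar (k + i * r + 1) (Finsupp.single S 1)) ≠ 0}.Finite ∧
      {i : ℤ | psi (k + i * r + 1) (psiStar (k + i * r) (Finsupp.single S 1)) ≠ 0}.Finite) ∧
    (∀ I J : Maya,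
      bform (Eop r k (Finsupp.single I 1)) (Finsupp.single J 1)
        = bform (Finsupp.single I 1) (Fop r k (Finsupp.single J 1))) ∧
    (∀ S : Maya, ∃ a : ℂ,
      (Eop r k ∘ₗ Fop r k - Fop r k ∘ₗ Eop r k) (Finsupp.single S 1)
        = a • Finsupp.single S 1) := by
  simp only [psi_psiStar_succ, psi_succ_psiStar]
  refine ⟨fun S => ⟨finite_support_Eop_terms hr k S, finite_support_Fop_terms hr k S⟩,
    fun I J => ?_, fun S => ?_⟩
  · rw [bform_single_one_right, bform_single_one_left, Eop_apply hr, Fop_apply hr,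
      Finsupp.finsum_apply (finite_support_Eop_terms hr k I),
      Finsupp.finsum_apply (finite_support_Fop_terms hr k J)]
    exact finsum_congr fun i => hop_single_apply _ _ I J
  · have hinj := injective_add_mul_natCast hr k
    have hcomm : ∀ i j : ℤ, i ≠ j →
        hop (k + i * r + 1) (k + i * r) (hop (k + j * r) (k + j * r + 1) (Finsupp.single S 1)) =
          hop (k + j * r) (k + j * r + 1) (hop (k + i * r + 1) (k + i * r) (Finsupp.single S 1)) :=
      fun i j hij => hop_hop_comm (fun h => hij (hinj (add_right_cancel h))) (hinj.ne hij) _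
    rw [LinearMap.comp_sub_comp_apply_eq_finsum _ _ _ _ _ (Eop_apply hr k) (Fop_apply hr k)
      (finite_support_Eop_terms hr k S) (finite_support_Fop_terms hr k S) hcomm]
    simp only [hop_swap_hop_single, ← sub_smul]
    exact ⟨_, (finsum_smul _ _).symm⟩

/-- The sums defining `E = Σ ψ(k+ir)ψ*(k+ir+1)` and `F = Σ ψ(k+ir+1)ψ*(k+ir)` are
locally finite; `E` and `F` are adjoint with respect to the bilinear form making the
semi-infinite monomials orthonormal; and the commutator `[E, F]` acts diagonally on
basis elements. -/
theorem E_F_adjoint_and_commutator_diagonal (r : ℕ) (hr : 0 < r) (k : ℤ)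
    (hk0 : 0 ≤ k) (hkr : k < r) :
    (∀ S : Maya,
      {i : ℤ | psi (k + i * r) (psiStar (k + i * r + 1) (Finsupp.single S 1)) ≠ 0}.Finite ∧
      {i : ℤ | psi (k + i * r + 1) (psiStar (k + i * r) (Finsupp.single S 1)) ≠ 0}.Finite) ∧
    (∀ I J : Maya,
      bform (Eop r k (Finsupp.single I 1)) (Finsupp.single J 1)
        = bform (Finsupp.single I 1) (Fop r k (Finsupp.single J 1))) ∧
    (∀ S : Maya, ∃ a : ℂ,
      (Eop r k ∘ₗ Fop r k - Fop r k ∘ₗ Eop r k) (Finsupp.single S 1)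
        = a • Finsupp.single S 1) :=
  E_F_adjoint_and_commutator_diagonal_general r hr k
end
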